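/- arXiv:2312.03916 — 3 statements merged into one kernel-verified Lean document; each statement's English description precedes it below -/
import Mathlib

section
/- Fix 0 < β < 1, let C_β = 2π e^{-2^β}, and define g(k) = 1/(C_β (1-ik) exp((1+ik)^β)) for real k (principal branch power). Then for every K ≥ 1, ∫_{|k| > K} |g(k)| dk ≤ (2^{⌈1/β⌉+1} · ⌈1/β⌉!)/(C_β · (cos(βπ/2))^{⌈1/β⌉}) · (1/K) · exp(-(1/2)·K^β · cos(βπ/2)). -/
/-!
For `0 ≤ Re z` we have `|arg z| ≤ π/2`, so `Re (z ^ β) ≥ ‖z‖ ^ β c` with `c = cos (βπ/2)`; applied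
to `z = 1 + ik` this gives `‖g k‖ ≤ 1 / (C |k| exp (|k| ^ β c))`. With `B = ⌈1/β⌉` one has
`|k| ≤ (|k| ^ β) ^ B`, and `x ^ B ≤ B! (2/c) ^ B exp (x c / 2)` at `x = |k| ^ β` spends half of the
exponential decay on absorbing this extra factor `|k|`, while the other half is bounded below by its
value at `|k| = K`. What remains is `|k| ^ (-2)` times a constant, whose integral over `|k| > K`
is `2 / K`.
-/

open Complex MeasureTheory Set

lemma setOf_lt_abs_eq (K : ℝ) : {x : ℝ | K < |x|} = Iio (-K) ∪ Ioi K := by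
  ext x
  simp only [mem_ofPred_eq, mem_union, mem_Iio, mem_Ioi, lt_abs, lt_neg]
  tauto

lemma measurableSet_lt_abs (K : ℝ) : MeasurableSet {x : ℝ | K < |x|} :=
  measurableSet_lt measurable_const continuous_abs.measurable

lemma IntegrableOn.comp_abs_of_Ioi {E : Type*} [NormedAddCommGroup E] {f : ℝ → E} {K : ℝ}
    (hK : 0 ≤ K) (hf : IntegrableOn f (Ioi K)) :
    IntegrableOn (fun x => f |x|) {x | K < |x|} := by
  rw [setOf_lt_abs_eq]
  refine IntegrableOn.union ?_ ?_
  · have hf' : IntegrableOn f (Ioi (- -K)) := by rwa [neg_neg]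
    exact hf'.comp_neg_Iio.congr_fun
      (fun x hx => by rw [abs_of_neg (by linarith [mem_Iio.mp hx])]) measurableSet_Iio
  · exact hf.congr_fun (fun x hx => by rw [abs_of_pos (hK.trans_lt hx)]) measurableSet_Ioi

lemma setIntegral_lt_abs_comp_abs {K : ℝ} (hK : 0 ≤ K) (f : ℝ → ℝ) :
    ∫ x in {x | K < |x|}, f |x| = 2 * ∫ x in Ioi K, f x := by
  have hind : {x : ℝ | K < |x|}.indicator (fun x => f |x|) = fun x => (Ioi K).indicator f |x| := by
    ext x; simp only [indicator, mem_ofPred_eq, mem_Ioi]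
  rw [← integral_indicator (measurableSet_lt_abs K), hind,
    integral_comp_abs, setIntegral_indicator measurableSet_Ioi, Ioi_inter_Ioi, sup_eq_right.mpr hK]

lemma integral_Ioi_rpow_neg_two {K : ℝ} (hK : 0 < K) : ∫ x in Ioi K, x ^ (-2 : ℝ) = K⁻¹ := by
  rw [integral_Ioi_rpow_of_lt (by norm_num) hK]
  norm_num [Real.rpow_neg_one]

lemma Complex.norm_rpow_mul_cos_le_re_cpow {z : ℂ} (hz : 0 ≤ z.re) {β : ℝ} (hβ0 : 0 ≤ β)
    (hβ2 : β ≤ 2) : ‖z‖ ^ β * Real.cos (β * Real.pi / 2) ≤ (z ^ (β : ℂ)).re := by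
  rw [cpow_ofReal_re]
  gcongr
  rw [← Real.cos_abs (arg z * β), abs_mul, abs_of_nonneg hβ0]
  have harg : |arg z| ≤ Real.pi / 2 := abs_arg_le_pi_div_two_iff.mpr hz
  apply Real.cos_le_cos_of_nonneg_of_le_pi (by positivity) (by nlinarith [Real.pi_pos])
  nlinarith

lemma abs_mul_exp_rpow_le_norm (k : ℝ) {β : ℝ} (hβ0 : 0 ≤ β) (hβ1 : β ≤ 1) :
    |k| * Real.exp (|k| ^ β * Real.cos (β * Real.pi / 2)) ≤
      ‖(1 - I * k) * exp ((1 + I * k) ^ (β : ℂ))‖ := by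
  have hcos : 0 ≤ Real.cos (β * Real.pi / 2) :=
    Real.cos_nonneg_of_mem_Icc ⟨by nlinarith [Real.pi_pos], by nlinarith [Real.pi_pos]⟩
  have h1 : |k| ≤ ‖1 - I * k‖ := by simpa using abs_im_le_norm (1 - I * k)
  have h2 : |k| ≤ ‖1 + I * k‖ := by simpa using abs_im_le_norm (1 + I * k)
  rw [norm_mul, norm_exp]
  gcongr
  calc |k| ^ β * Real.cos (β * Real.pi / 2) ≤ ‖1 + I * k‖ ^ β * Real.cos (β * Real.pi / 2) := by
        gcongr
    _ ≤ _ := norm_rpow_mul_cos_le_re_cpow (by simp) hβ0 (by linarith)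

lemma pow_le_factorial_mul_exp {x c : ℝ} (hx : 0 ≤ x) (hc : 0 < c) (n : ℕ) :
    x ^ n ≤ n.factorial * (2 / c) ^ n * Real.exp (x * c / 2) := by
  have h := Real.pow_div_factorial_le_exp (x := x * c / 2) (by positivity) n
  rw [div_le_iff₀ (by positivity)] at h
  calc x ^ n = (x * c / 2) ^ n * (2 / c) ^ n := by rw [← mul_pow]; field_simp
    _ ≤ _ := by nlinarith [pow_pos (div_pos two_pos hc) n]

lemma self_le_rpow_pow {t β : ℝ} (ht : 1 ≤ t) {n : ℕ} (hn : 1 ≤ β * n) : t ≤ (t ^ β) ^ n := by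
  calc t = t ^ (1 : ℝ) := (Real.rpow_one t).symm
    _ ≤ t ^ (β * n) := Real.rpow_le_rpow_of_exponent_le ht hn
    _ = (t ^ β) ^ n := by rw [Real.rpow_mul (by linarith), Real.rpow_natCast]

lemma le_mul_exp_rpow {β c K t : ℝ} (hβ : 0 < β) (hc : 0 < c) {n : ℕ} (hn : 1 ≤ β * n)
    (hK : 1 ≤ K) (ht : K ≤ t) :
    t ≤ n.factorial * (2 / c) ^ n * Real.exp (-(1 / 2) * K ^ β * c) * Real.exp (t ^ β * c) := by
  have hKt : K ^ β ≤ t ^ β := Real.rpow_le_rpow (by linarith) ht hβ.le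
  calc t ≤ (t ^ β) ^ n := self_le_rpow_pow (hK.trans ht) hn
    _ ≤ n.factorial * (2 / c) ^ n * Real.exp (t ^ β * c / 2) :=
        pow_le_factorial_mul_exp (Real.rpow_nonneg (by linarith) β) hc n
    _ ≤ _ := by
        rw [mul_assoc _ (Real.exp _), ← Real.exp_add]
        gcongr
        nlinarith

lemma norm_one_div_mul_exp_cpow_le {C β k A : ℝ} (hC : 0 < C) (hβ0 : 0 ≤ β) (hβ1 : β ≤ 1)
    (hk : 0 < |k|) (hA : |k| ≤ A * Real.exp (|k| ^ β * Real.cos (β * Real.pi / 2))) :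
    ‖1 / ((C : ℂ) * (1 - I * k) * exp ((1 + I * k) ^ (β : ℂ)))‖ ≤ A / C * |k| ^ (-2 : ℝ) := by
  set e := Real.exp (|k| ^ β * Real.cos (β * Real.pi / 2))
  have hnorm : ‖1 / ((C : ℂ) * (1 - I * k) * exp ((1 + I * k) ^ (β : ℂ)))‖ =
      1 / (C * ‖(1 - I * k) * exp ((1 + I * k) ^ (β : ℂ))‖) := by
    rw [mul_assoc, norm_div, norm_one, norm_mul, norm_real, Real.norm_of_nonneg hC.le]
  have hsq : |k| ^ (-2 : ℝ) = 1 / |k| ^ 2 := by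
    rw [Real.rpow_neg hk.le, Real.rpow_two, one_div]
  calc _ = 1 / (C * ‖(1 - I * k) * exp ((1 + I * k) ^ (β : ℂ))‖) := hnorm
    _ ≤ 1 / (C * (|k| * e)) := by
        gcongr
        exact abs_mul_exp_rpow_le_norm k hβ0 hβ1
    _ ≤ A / C * |k| ^ (-2 : ℝ) := by
        rw [hsq, div_mul_div_comm, mul_one, div_le_div_iff₀ (by positivity) (by positivity)]
        nlinarith [mul_le_mul_of_nonneg_left hA (by positivity : 0 ≤ C * |k|)]

/-- Tail (truncation) bound for the improved LCHS integrand. -/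
theorem stmt8 (β : ℝ) (hβ0 : 0 < β) (hβ1 : β < 1) :
    let C : ℝ := 2 * Real.pi * Real.exp (-(2 : ℝ) ^ β)
    let g : ℝ → ℂ := fun k =>
      1 / ((C : ℂ) * (1 - Complex.I * k) * Complex.exp ((1 + Complex.I * k) ^ (β : ℂ)))
    let B : ℕ := ⌈1 / β⌉₊
    ∀ K : ℝ, 1 ≤ K →
      (∫ k in {k : ℝ | K < |k|}, ‖g k‖) ≤
        (2 ^ (B + 1) * (Nat.factorial B : ℝ)) / (C * Real.cos (β * Real.pi / 2) ^ B) *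
          (1 / K) * Real.exp (-(1 / 2) * K ^ β * Real.cos (β * Real.pi / 2)) := by
  intro C g B K hK
  set c := Real.cos (β * Real.pi / 2)
  have hC : 0 < C := by positivity
  have hc : 0 < c :=
    Real.cos_pos_of_mem_Ioo ⟨by nlinarith [Real.pi_pos], by nlinarith [Real.pi_pos]⟩
  have hB : 1 ≤ β * B := by
    rw [← div_le_iff₀' hβ0]
    exact Nat.le_ceil _
  set A := B.factorial * (2 / c) ^ B * Real.exp (-(1 / 2) * K ^ β * c) with hA
  have hbound : ∀ k ∈ {k : ℝ | K < |k|}, ‖g k‖ ≤ A / C * |k| ^ (-2 : ℝ) := fun k hk =>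
    norm_one_div_mul_exp_cpow_le hC hβ0.le hβ1.le (by linarith [mem_ofPred.mp hk])
      (le_mul_exp_rpow hβ0 hc hB hK hk.le)
  calc (∫ k in {k : ℝ | K < |k|}, ‖g k‖) ≤ ∫ k in {k : ℝ | K < |k|}, A / C * |k| ^ (-2 : ℝ) :=
        integral_mono_of_nonneg (ae_of_all _ fun _ => norm_nonneg _)
          (IntegrableOn.comp_abs_of_Ioi (f := fun x => A / C * x ^ (-2 : ℝ)) (by linarith)
            ((integrableOn_Ioi_rpow_of_lt (by norm_num) (by linarith)).const_mul _))
          (ae_restrict_of_forall_mem (measurableSet_lt_abs K) hbound)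
    _ = 2 * (A / C * K⁻¹) := by
        rw [setIntegral_lt_abs_comp_abs (by linarith) (fun x => A / C * x ^ (-2 : ℝ)),
          integral_const_mul, integral_Ioi_rpow_neg_two (by linarith)]
    _ = _ := by rw [hA, div_pow]; field_simp; ring
end

section
/- Fix 0 < β < 1, C_β = 2π e^{-2^β}, and define g(k) = 1/(C_β (1-ik) exp((1+ik)^β)) for real k. Then for every integer q ≥ 0 and every real k, |g^{(q)}(k)| ≤ (4/(3 C_β)) · 4^q · q!. -/
/-! The weight `g` is the restriction to `ℝ` of a function holomorphic on the strip
`|Im z| < 1`. On the circle of radius `1/4` about a real point `k` one has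
`|1 - iz| ≥ Re (1 - iz) = 1 + Im z ≥ 3/4`, and `Re (1 + iz)^β ≥ 0` because
`|arg (1 + iz)| ≤ π/2` and `|β| ≤ 1`, so `|exp ((1 + iz)^β)| ≥ 1` and `|g| ≤ 4/(3C)` there.
Cauchy's estimate on that circle gives `|g^{(q)}(k)| ≤ q! · 4/(3C) · 4^q`. -/

open Complex Metric

lemma iteratedDeriv_comp_ofReal {G : ℂ → ℂ} {S : Set ℂ} (hS : IsOpen S)
    (hG : DifferentiableOn ℂ G S) (hR : ∀ x : ℝ, (x : ℂ) ∈ S) (n : ℕ) :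
    iteratedDeriv n (fun x : ℝ => G x) = fun x : ℝ => iteratedDeriv n G x := by
  induction n with
  | zero => simp
  | succ n ih =>
    have hGn : AnalyticOnNhd ℂ (iteratedDeriv n G) S := by
      simpa only [iteratedDeriv_eq_iterate] using (hG.analyticOnNhd hS).iterated_deriv n
    funext x
    rw [iteratedDeriv_succ, iteratedDeriv_succ, ih]
    exact (hGn _ (hR x)).differentiableAt.hasDerivAt.comp_ofReal.deriv

lemma abs_im_le_of_mem_closedBall_ofReal {x : ℝ} {r : ℝ} {z : ℂ}
    (hz : z ∈ closedBall (x : ℂ) r) : |z.im| ≤ r := by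
  simpa using (abs_im_le_norm (z - x)).trans (mem_closedBall_iff_norm.mp hz)

lemma re_cpow_ofReal_nonneg {w : ℂ} (hw : 0 ≤ w.re) {β : ℝ} (hβ : |β| ≤ 1) :
    0 ≤ (w ^ (β : ℂ)).re := by
  rcases eq_or_ne w 0 with rfl | hw0
  · rcases eq_or_ne β 0 with rfl | hβ0 <;> simp [*]
  rw [cpow_def_of_ne_zero hw0, exp_re]
  have harg : |w.arg| ≤ Real.pi / 2 := abs_arg_le_pi_div_two_iff.mpr hw
  have hβarg : |β * w.arg| ≤ Real.pi / 2 := by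
    rw [abs_mul]
    nlinarith [abs_nonneg β, abs_nonneg w.arg]
  have hcos : 0 ≤ Real.cos (β * w.arg) :=
    Real.cos_nonneg_of_mem_Icc (abs_le.mp hβarg)
  have him : (log w * β).im = β * w.arg := by simp [log_im, mul_comm]
  rw [him]
  positivity

lemma re_one_add_I_mul (z : ℂ) : (1 + I * z).re = 1 - z.im := by simp [sub_eq_add_neg]

lemma re_one_sub_I_mul (z : ℂ) : (1 - I * z).re = 1 + z.im := by simp

noncomputable def lchsWeight (β C : ℝ) (z : ℂ) : ℂ :=
  1 / ((C : ℂ) * (1 - I * z) * exp ((1 + I * z) ^ (β : ℂ)))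

lemma differentiableOn_lchsWeight {β C : ℝ} (hC : C ≠ 0) :
    DifferentiableOn ℂ (lchsWeight β C) (im ⁻¹' Set.Ioo (-1) 1) := by
  intro z ⟨hz₁, hz₂⟩
  have hre_add : 0 < (1 + I * z).re := by rw [re_one_add_I_mul]; linarith
  have hre_sub : 0 < (1 - I * z).re := by rw [re_one_sub_I_mul]; linarith
  have hne : (C : ℂ) * (1 - I * z) * exp ((1 + I * z) ^ (β : ℂ)) ≠ 0 := by
    refine mul_ne_zero (mul_ne_zero (ofReal_ne_zero.mpr hC) ?_) (exp_ne_zero _)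
    rintro h
    simp only [h, zero_re, lt_self_iff_false] at hre_sub
  refine DifferentiableAt.differentiableWithinAt ?_
  unfold lchsWeight
  fun_prop (disch := first | exact hne | exact Or.inl hre_add)

lemma norm_lchsWeight_le {β C : ℝ} (hC : 0 < C) (hβ : |β| ≤ 1) {z : ℂ}
    (hz₁ : -1 < z.im) (hz₂ : z.im ≤ 1) :
    ‖lchsWeight β C z‖ ≤ 1 / (C * (1 + z.im)) := by
  have hden : 1 + z.im ≤ ‖1 - I * z‖ := by
    simpa only [re_one_sub_I_mul] using re_le_norm (1 - I * z)
  have hexp : 1 ≤ ‖exp ((1 + I * z) ^ (β : ℂ))‖ := by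
    rw [norm_exp]
    exact Real.one_le_exp (re_cpow_ofReal_nonneg (by rw [re_one_add_I_mul]; linarith) hβ)
  rw [lchsWeight, norm_div, norm_one, norm_mul, norm_mul, norm_real, Real.norm_of_nonneg hC.le]
  have hpos : 0 < 1 + z.im := by linarith
  calc 1 / (C * ‖1 - I * z‖ * ‖exp ((1 + I * z) ^ (β : ℂ))‖)
      ≤ 1 / (C * (1 + z.im) * 1) := by gcongr
    _ = 1 / (C * (1 + z.im)) := by rw [mul_one]

lemma norm_iteratedDeriv_lchsWeight_le {β C : ℝ} (hC : 0 < C) (hβ : |β| ≤ 1) (q : ℕ) (k : ℝ) :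
    ‖iteratedDeriv q (lchsWeight β C) k‖ ≤ 4 / (3 * C) * 4 ^ q * q.factorial := by
  suffices ‖iteratedDeriv q (lchsWeight β C) k‖ ≤ q.factorial * (4 / (3 * C)) / (1 / 4) ^ q by
    rw [one_div, inv_pow, div_inv_eq_mul] at this
    linarith
  have hball : closedBall (k : ℂ) (1 / 4) ⊆ im ⁻¹' Set.Ioo (-1) 1 := fun z hz => by
    have := abs_le.mp (abs_im_le_of_mem_closedBall_ofReal hz)
    constructor <;> linarith
  refine norm_iteratedDeriv_le_of_forall_mem_sphere_norm_le q (by norm_num) ?_ fun z hz => ?_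
  · rw [← closure_ball _ (by norm_num)] at hball
    exact ((differentiableOn_lchsWeight hC.ne').mono hball).diffContOnCl
  · have him := abs_le.mp (abs_im_le_of_mem_closedBall_ofReal (sphere_subset_closedBall hz))
    calc ‖lchsWeight β C z‖ ≤ 1 / (C * (1 + z.im)) :=
          norm_lchsWeight_le hC hβ (by linarith) (by linarith)
      _ ≤ 4 / (3 * C) := by
          rw [div_le_div_iff₀ (by nlinarith) (by positivity)]
          nlinarith

/-- Derivative bound for the full LCHS weight `g(k) = 1/(C_β (1-ik) exp((1+ik)^β))`:
`|g^{(q)}(k)| ≤ (4/(3C_β)) 4^q q!`. -/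
theorem stmt10 (β : ℝ) (hβ0 : 0 < β) (hβ1 : β < 1) (q : ℕ) (k : ℝ) :
    let C : ℝ := 2 * Real.pi * Real.exp (-(2 : ℝ) ^ β)
    let g : ℝ → ℂ := fun k =>
      1 / ((C : ℂ) * (1 - Complex.I * k) * Complex.exp ((1 + Complex.I * k) ^ (β : ℂ)))
    ‖iteratedDeriv q g k‖ ≤ (4 / (3 * C)) * 4 ^ q * (Nat.factorial q : ℝ) := by
  intro C g
  have hC : 0 < C := by positivity
  have hβ : |β| ≤ 1 := abs_le.mpr ⟨by linarith, hβ1.le⟩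
  have hg : iteratedDeriv q g k = iteratedDeriv q (lchsWeight β C) k :=
    congrFun (iteratedDeriv_comp_ofReal (isOpen_Ioo.preimage continuous_im)
      (differentiableOn_lchsWeight hC.ne') (fun x => by simp [Set.mem_preimage]) q) k
  exact hg ▸ norm_iteratedDeriv_lchsWeight_le hC hβ q k
end

section
/- Let f : ℂ → ℂ be continuous on the closed lower half plane, analytic on the open lower half plane, and satisfy |f(z)| ≤ C·e^{-c|z|} there for constants C, c > 0. Then for every real w with 0 < w < c/2, ∫_ℝ f(k)·e^{-iwk} dk = 0. -/
open Complex MeasureTheory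

/-!
Closing the real segment `[-R, R]` by the rectangle through `-R - R i` and `R`, Cauchy's theorem
expresses `∫_{-R}^{R} g` through three edges on which `|z| ≥ R`, so it is `O(R e^{-cR})` for
`g = f(z) e^{-iwz}`; the factor `e^{-iwz}` has modulus `e^{w Im z} ≤ 1` in the lower half plane.
Letting `R → ∞` gives the claim.
-/

open Filter Topology Set intervalIntegral

theorem norm_cexp_neg_I_mul_le_one {w : ℝ} (hw : 0 ≤ w) {z : ℂ} (hz : z.im ≤ 0) :
    ‖cexp (-(I * w * z))‖ ≤ 1 := by
  rw [norm_exp, Real.exp_le_one_iff]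
  simpa [mul_re, mul_im] using mul_nonpos_of_nonneg_of_nonpos hw hz

theorem integrable_exp_neg_mul_abs {c : ℝ} (hc : 0 < c) :
    Integrable fun x : ℝ => Real.exp (-c * |x|) := by
  refine LocallyIntegrable.integrable_of_isBigO_atTop_of_norm_isNegInvariant
    (g := fun x : ℝ => Real.exp (-c * x)) (by fun_prop : Continuous _).locallyIntegrable
    (by simp [Function.comp_def]) ?_
    ⟨Ioi 0, Ioi_mem_atTop 0, exp_neg_integrableOn_Ioi 0 hc⟩
  refine Asymptotics.IsBigO.of_bound 1 ?_
  filter_upwards [eventually_ge_atTop 0] with x hx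
  simp [abs_of_nonneg hx]

theorem tendsto_mul_exp_neg_mul_atTop_nhds_zero {c : ℝ} (hc : 0 < c) :
    Tendsto (fun R : ℝ => R * Real.exp (-c * R)) atTop (𝓝 0) := by
  have h := ((Real.tendsto_pow_mul_exp_neg_atTop_nhds_zero 1).comp
    (tendsto_id.const_mul_atTop hc)).const_mul c⁻¹
  rw [mul_zero] at h
  refine h.congr fun R => ?_
  simp only [Function.comp_apply, id, pow_one]
  field_simp

section LowerHalfPlane

variable {g : ℂ → ℂ}

theorem intervalIntegral_eq_lower_rect_edges (hcont : ContinuousOn g {z : ℂ | z.im ≤ 0})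
    (hdiff : DifferentiableOn ℂ g {z : ℂ | z.im < 0}) {R : ℝ} (hR : 0 ≤ R) :
    ∫ x : ℝ in -R..R, g x = (∫ x : ℝ in -R..R, g (x + ↑(-R) * I)) +
      I • (∫ y : ℝ in -R..0, g (R + y * I)) - I • ∫ y : ℝ in -R..0, g (↑(-R) + y * I) := by
  have hrect := integral_boundary_rect_eq_zero_of_continuousOn_of_differentiableOn g
    ⟨-R, -R⟩ R (hcont.mono fun z hz => ?_) (hdiff.mono fun z hz => ?_)
  · simp only [ofReal_re, ofReal_im, ofReal_zero, zero_mul, add_zero] at hrect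
    linear_combination -hrect
  · simp only [ofReal_re, ofReal_im, uIcc_of_le (neg_nonpos.2 hR), mem_reProdIm] at hz
    exact hz.2.2
  · simp only [ofReal_re, ofReal_im, mem_reProdIm, min_eq_left (neg_nonpos.2 hR),
      max_eq_right (neg_nonpos.2 hR)] at hz
    exact hz.2.2

theorem norm_intervalIntegral_le_of_lower_rect (hcont : ContinuousOn g {z : ℂ | z.im ≤ 0})
    (hdiff : DifferentiableOn ℂ g {z : ℂ | z.im < 0}) {R M : ℝ} (hR : 0 ≤ R)
    (hM : ∀ z : ℂ, z.im ≤ 0 → R ≤ ‖z‖ → ‖g z‖ ≤ M) :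
    ‖∫ x : ℝ in -R..R, g x‖ ≤ 4 * R * M := by
  have hbottom : ‖∫ x : ℝ in -R..R, g (x + ↑(-R) * I)‖ ≤ M * |R - -R| :=
    norm_integral_le_of_norm_le_const fun x _ => hM _ (by simpa using hR) <| by
      simpa [abs_of_nonneg hR] using abs_im_le_norm (x + ↑(-R) * I)
  have hside (a : ℝ) (ha : |a| = R) : ‖I • ∫ y : ℝ in -R..0, g (a + y * I)‖ ≤ M * |0 - -R| := by
    rw [norm_smul, norm_I, one_mul]
    refine norm_integral_le_of_norm_le_const fun y hy => hM _ ?_ ?_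
    · simpa using (uIoc_of_le (neg_nonpos.2 hR) ▸ hy).2
    · simpa [ha] using abs_re_le_norm (a + y * I)
  have hright := hside R (abs_of_nonneg hR)
  have hleft := hside (-R) (by rw [abs_neg, abs_of_nonneg hR])
  rw [sub_neg_eq_add, ← two_mul, abs_of_nonneg (by positivity)] at hbottom
  rw [sub_neg_eq_add, zero_add, abs_of_nonneg hR] at hright hleft
  rw [intervalIntegral_eq_lower_rect_edges hcont hdiff hR]
  calc _ ≤ _ := norm_sub_le_of_le (norm_add_le_of_le hbottom hright) hleft
    _ = 4 * R * M := by ring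

theorem integral_eq_zero_of_norm_le_exp_neg (hcont : ContinuousOn g {z : ℂ | z.im ≤ 0})
    (hdiff : DifferentiableOn ℂ g {z : ℂ | z.im < 0}) {C c : ℝ} (hc : 0 < c)
    (hdecay : ∀ z : ℂ, z.im ≤ 0 → ‖g z‖ ≤ C * Real.exp (-c * ‖z‖)) :
    ∫ x : ℝ, g x = 0 := by
  have hC : 0 ≤ C := by simpa using (norm_nonneg _).trans (hdecay 0 le_rfl)
  have hint : Integrable fun x : ℝ => g x := by
    refine ((integrable_exp_neg_mul_abs hc).const_mul C).mono'
      (hcont.comp_continuous continuous_ofReal fun x => by simp).aestronglyMeasurable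
      (.of_forall fun x => ?_)
    simpa using hdecay x (by simp)
  have hsegment : ∀ R ≥ 0, ‖∫ x : ℝ in -R..R, g x‖ ≤ 4 * C * (R * Real.exp (-c * R)) :=
    fun R hR => (norm_intervalIntegral_le_of_lower_rect (M := C * Real.exp (-c * R)) hcont hdiff
      hR fun z hz hRz => (hdecay z hz).trans <|
        mul_le_mul_of_nonneg_left (Real.exp_le_exp.2 (by nlinarith)) hC).trans_eq (by ring)
  refine tendsto_nhds_unique (intervalIntegral_tendsto_integral hint tendsto_neg_atTop_atBot
    tendsto_id) (squeeze_zero_norm' (eventually_ge_atTop 0 |>.mono hsegment) ?_)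
  simpa using (tendsto_mul_exp_neg_mul_atTop_nhds_zero hc).const_mul (4 * C)

end LowerHalfPlane

theorem stmt16_general (f : ℂ → ℂ) (C c : ℝ) (hc : 0 < c)
    (hcont : ContinuousOn f {z : ℂ | z.im ≤ 0})
    (hdiff : DifferentiableOn ℂ f {z : ℂ | z.im < 0})
    (hdecay : ∀ z : ℂ, z.im ≤ 0 → ‖f z‖ ≤ C * Real.exp (-c * ‖z‖)) :
    ∀ w : ℝ, 0 < w → w < c / 2 →
      ∫ k : ℝ, f (k : ℂ) * Complex.exp (-(Complex.I * w * k)) = 0 := by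
  intro w hw _
  refine integral_eq_zero_of_norm_le_exp_neg (g := fun z => f z * cexp (-(I * w * z))) (C := C)
    (hcont.mul (by fun_prop)) (hdiff.mul (by fun_prop)) hc fun z hz => ?_
  rw [norm_mul]
  exact (mul_le_of_le_one_right (norm_nonneg _) (norm_cexp_neg_I_mul_le_one hw.le hz)).trans
    (hdecay z hz)

/-- If `f` is analytic on the open lower half plane, continuous on the closed lower half
plane, and `|f(z)| ≤ C e^{-c|z|}` there, then `∫ f(k) e^{-iwk} dk = 0` for `0 < w < c/2`. -/
theorem stmt16 (f : ℂ → ℂ) (C c : ℝ) (hC : 0 < C) (hc : 0 < c)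
    (hcont : ContinuousOn f {z : ℂ | z.im ≤ 0})
    (hdiff : DifferentiableOn ℂ f {z : ℂ | z.im < 0})
    (hdecay : ∀ z : ℂ, z.im ≤ 0 → ‖f z‖ ≤ C * Real.exp (-c * ‖z‖)) :
    ∀ w : ℝ, 0 < w → w < c / 2 →
      ∫ k : ℝ, f (k : ℂ) * Complex.exp (-(Complex.I * w * k)) = 0 :=
  stmt16_general f C c hc hcont hdiff hdecay
end
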